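/- Semantic version of theorem T1: for every WTS M, state s, formulas φ, ψ, and r, q ∈ ℚ≥0, if M,s ⊨ L_r φ, M,s ⊨ L_q ψ, and M,s ⊨ L₀(φ ∧ ψ), then M,s ⊨ L_{max(r,q)}(φ ∧ ψ). -/

import Mathlib

open Classical

/-- A weighted transition system with states `S` and atomic propositions `AP`. -/
structure WTS (S AP : Type) where
  tr : S → NNReal → S → Prop
  label : S → Set AP

/-- The image set θ(s)(T) = {r | ∃ t ∈ T, s —r→ t}. -/
def theta {S AP : Type} (M : WTS S AP) (s : S) (T : Set S) : Set NNReal :=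
  {r | ∃ t ∈ T, M.tr s r t}

/-- θ⁻(s)(T): the infimum of the image set, or −∞ if it is empty. -/
noncomputable def thetaMin {S AP : Type} (M : WTS S AP) (s : S) (T : Set S) : EReal :=
  if theta M s T = ∅ then ⊥
  else sInf ((fun r : NNReal => ((r : ℝ) : EReal)) '' theta M s T)

/-- θ⁺(s)(T): the supremum of the image set, or ∞ if it is empty. -/
noncomputable def thetaMax {S AP : Type} (M : WTS S AP) (s : S) (T : Set S) : EReal :=
  if theta M s T = ∅ then ⊤
  else sSup ((fun r : NNReal => ((r : ℝ) : EReal)) '' theta M s T)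

/-- A generalized weighted bisimulation relation. -/
def IsGWBisim {S AP : Type} (M : WTS S AP) (R : S → S → Prop) : Prop :=
  Equivalence R ∧
    ∀ s t : S, R s t →
      M.label s = M.label t ∧
      ∀ T : Set S, (∃ u : S, T = {v | R u v}) →
        thetaMin M s T = thetaMin M t T ∧ thetaMax M s T = thetaMax M t T

/-- Generalized weighted bisimilarity ∼. -/
def gwBisimilar {S AP : Type} (M : WTS S AP) (s t : S) : Prop :=
  ∃ R : S → S → Prop, IsGWBisim M R ∧ R s t

/-- A (classical) weighted bisimulation relation. -/
def IsWBisim {S AP : Type} (M : WTS S AP) (R : S → S → Prop) : Prop :=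
  Equivalence R ∧
    ∀ s t : S, R s t →
      M.label s = M.label t ∧
      (∀ (r : NNReal) (s' : S), M.tr s r s' → ∃ t' : S, M.tr t r t' ∧ R s' t') ∧
      (∀ (r : NNReal) (t' : S), M.tr t r t' → ∃ s' : S, M.tr s r s' ∧ R s' t')

/-- Weighted bisimilarity ∼_W. -/
def wBisimilar {S AP : Type} (M : WTS S AP) (s t : S) : Prop :=
  ∃ R : S → S → Prop, IsWBisim M R ∧ R s t

/-- Formulae of the logic L. -/
inductive Fml (AP : Type) where
  | atom : AP → Fml AP
  | neg : Fml AP → Fml AP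
  | and : Fml AP → Fml AP → Fml AP
  | L : ℚ≥0 → Fml AP → Fml AP
  | M : ℚ≥0 → Fml AP → Fml AP

/-- Disjunction, as a derived operator. -/
def Fml.or {AP : Type} (φ ψ : Fml AP) : Fml AP := .neg (.and (.neg φ) (.neg ψ))

/-- The satisfaction relation M, s ⊨ φ. -/
noncomputable def Sat {S AP : Type} (M : WTS S AP) : Fml AP → S → Prop
  | .atom p, s => p ∈ M.label s
  | .neg φ, s => ¬ Sat M φ s
  | .and φ ψ, s => Sat M φ s ∧ Sat M ψ s
  | .L r φ, s => ((((r : ℚ) : ℝ)) : EReal) ≤ thetaMin M s {u | Sat M φ u}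
  | .M r φ, s => thetaMax M s {u | Sat M φ u} ≤ ((((r : ℚ) : ℝ)) : EReal)

section Theta

variable {S AP : Type} (M : WTS S AP) (s : S)

theorem theta_mono {T U : Set S} (hTU : T ⊆ U) : theta M s T ⊆ theta M s U :=
  fun _ ⟨t, ht, htr⟩ => ⟨t, hTU ht, htr⟩

theorem theta_nonempty_of_thetaMin_ne_bot {T : Set S} (h : thetaMin M s T ≠ ⊥) :
    (theta M s T).Nonempty := by
  by_contra hT
  exact h (if_pos (Set.not_nonempty_iff_eq_empty.mp hT))

theorem thetaMin_le_thetaMin_of_subset {T U : Set S} (hT : (theta M s T).Nonempty)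
    (hTU : T ⊆ U) : thetaMin M s U ≤ thetaMin M s T := by
  have hU : (theta M s U).Nonempty := hT.mono (theta_mono M s hTU)
  rw [thetaMin, thetaMin, if_neg hT.ne_empty, if_neg hU.ne_empty]
  exact sInf_le_sInf (Set.image_mono (theta_mono M s hTU))

end Theta

theorem semantic_T1 {S AP : Type} (M : WTS S AP) (s : S) (φ ψ : Fml AP) (r q : ℚ≥0)
    (h₁ : Sat M (.L r φ) s) (h₂ : Sat M (.L q ψ) s) (h₃ : Sat M (.L 0 (φ.and ψ)) s) :
    Sat M (.L (max r q) (φ.and ψ)) s := by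
  -- θ⁻ is antitone in the target set only while the image stays nonempty (θ⁻ ∅ = −∞).
  have hne : (theta M s {u | Sat M (φ.and ψ) u}).Nonempty :=
    theta_nonempty_of_thetaMin_ne_bot M s (ne_bot_of_le_ne_bot (by simp) h₃)
  have hcast : ((((max r q : ℚ≥0) : ℚ) : ℝ) : EReal) =
      max (((r : ℚ) : ℝ) : EReal) ((q : ℚ) : ℝ) := by
    rw [NNRat.coe_max, Rat.cast_max]
    exact EReal.coe_strictMono.monotone.map_max
  rw [Sat, hcast]
  exact max_le (h₁.trans (thetaMin_le_thetaMin_of_subset M s hne fun _ h => h.1))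
    (h₂.trans (thetaMin_le_thetaMin_of_subset M s hne fun _ h => h.2))
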